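/- Let e_1, ..., e_n be independent random variables where e_i has c.d.f. f_i(x) = min{exp(ω_i(x - z_i)), 1} with ω_i > 0 (i.e., z_i - e_i is exponential with rate ω_i). Assume z_1 ≥ z_2 ≥ ... ≥ z_n, set z_{n+1} = -∞, and define h_i = exp(Σ_{j=1}^i ω_j (z_{i+1} - z_i)) for i < n and h_n = 0. Then E[max{e_1,...,e_n}] = z_1 - Σ_{i=1}^n ( (1 - h_i) ∏_{j=1}^{i-1} h_j ) / (Σ_{j=1}^i ω_j ). -/

import Mathlib

/-!
Put `a i = z 0 - z i`, so that `0 = a 0 ≤ a 1 ≤ ⋯`. The gap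
`z 0 - max_i e i = min_i (a i + X i / w i)` is nonnegative, and by independence its tail is
`ℙ(gap > t) = ∏_i exp (-(w i * (t - a i))⁺)`, so `𝔼[gap] = ∫_0^∞ ℙ(gap > t) dt`.
On `[a i, a (i+1)]` exactly the first `i + 1` factors are active, so there the tail is its value
at `a i` times `exp (-W i * (t - a i))` with `W i = ∑_{j ≤ i} w j`; its value at `a (i+1)` is
therefore its value at `a i` times `h i`, i.e. the tail at `a i` is `∏_{j<i} h j`. Integrating
piece by piece gives the `i`-th summand; the last piece is `[a (n-1), ∞)`, which is why
`h (n-1) = 0`.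
-/

open MeasureTheory ProbabilityTheory Set Real Filter Finset

section ExpIntegrals

variable {W a : ℝ}

lemma hasDerivAt_neg_exp_mul_sub_div (hW : W ≠ 0) (t : ℝ) :
    HasDerivAt (fun s => -exp (W * (a - s)) / W) (exp (W * (a - t))) t := by
  have hlin : HasDerivAt (fun s => W * (a - s)) (-W) t := by
    simpa using ((hasDerivAt_id t).const_sub a).const_mul W
  refine (hlin.exp.neg.div_const W).congr_deriv ?_
  field_simp

lemma integral_Ioc_exp_mul_sub (hW : W ≠ 0) {b : ℝ} (hab : a ≤ b) :
    ∫ t in Ioc a b, exp (W * (a - t)) = (1 - exp (W * (a - b))) / W := by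
  rw [← intervalIntegral.integral_of_le hab, intervalIntegral.integral_eq_sub_of_hasDerivAt
    (fun t _ => hasDerivAt_neg_exp_mul_sub_div hW t)
    (Continuous.intervalIntegrable (by fun_prop) _ _)]
  simp only [sub_self, mul_zero, exp_zero]
  ring

lemma integral_Ioi_exp_mul_sub (hW : 0 < W) : ∫ t in Ioi a, exp (W * (a - t)) = 1 / W := by
  have hexp : (fun t => exp (W * (a - t))) = fun t => exp (W * a) * exp (-W * t) := by
    funext t
    rw [← exp_add]
    ring_nf
  have hlim : Tendsto (fun s => -exp (W * (a - s)) / W) atTop (nhds 0) := by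
    have hlin : Tendsto (fun s => W * (a - s)) atTop atBot := by
      simpa [sub_eq_add_neg] using
        (tendsto_atBot_add_const_left _ a tendsto_neg_atTop_atBot).const_mul_atBot hW
    simpa using (tendsto_exp_atBot.comp hlin).neg.div_const W
  rw [integral_Ioi_of_hasDerivAt_of_tendsto' (fun t _ => hasDerivAt_neg_exp_mul_sub_div hW.ne' t)
    (hexp ▸ (exp_neg_integrableOn_Ioi a hW).const_mul _) hlim]
  simp only [sub_self, mul_zero, exp_zero]
  ring

end ExpIntegrals

theorem integral_Ioi_eq_sum_Ioc_add_Ioi {f : ℝ → ℝ} {a : ℕ → ℝ} (ha : Monotone a)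
    (hf : IntegrableOn f (Ioi (a 0))) (m : ℕ) :
    ∫ t in Ioi (a 0), f t = (∑ i ∈ range m, ∫ t in Ioc (a i) (a (i + 1)), f t)
      + ∫ t in Ioi (a m), f t := by
  have hsub : ∀ i, Ioi (a i) ⊆ Ioi (a 0) := fun i => Ioi_subset_Ioi (ha (Nat.zero_le i))
  have hpieces :
      ∑ i ∈ range m, ∫ t in Ioc (a i) (a (i + 1)), f t = ∫ t in Ioc (a 0) (a m), f t := by
    rw [← intervalIntegral.integral_of_le (ha (Nat.zero_le m)),
      ← intervalIntegral.sum_integral_adjacent_intervals fun i _ =>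
        (intervalIntegrable_iff_integrableOn_Ioc_of_le (ha (Nat.le_succ i))).mpr
          (hf.mono_set (Ioc_subset_Ioi_self.trans (hsub i)))]
    exact sum_congr rfl fun i _ => (intervalIntegral.integral_of_le (ha (Nat.le_succ i))).symm
  rw [hpieces, ← setIntegral_union (Ioc_disjoint_Ioi le_rfl) measurableSet_Ioi
    (hf.mono_set (Ioc_subset_Ioi_self)) (hf.mono_set (hsub m)),
    Ioc_union_Ioi_eq_Ioi (ha (Nat.zero_le m))]

/-- `minTail a w n t = ℙ(t < min_{i<n} (a i + X i / w i))` for independent `X i ~ Exp(1)`. -/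
noncomputable def minTail (a w : ℕ → ℝ) (n : ℕ) (t : ℝ) : ℝ :=
  ∏ i ∈ range n, exp (-max (w i * (t - a i)) 0)

namespace minTail

variable {a w : ℕ → ℝ} {n : ℕ}

lemma nonneg (t : ℝ) : 0 ≤ minTail a w n t :=
  prod_nonneg fun _ _ => (exp_pos _).le

lemma continuous : Continuous (minTail a w n) := by
  unfold minTail
  fun_prop

lemma le_exp (hn : 0 < n) (t : ℝ) : minTail a w n t ≤ exp (-(w 0 * (t - a 0))) := by
  obtain ⟨m, rfl⟩ := Nat.exists_eq_add_of_lt hn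
  rw [minTail, zero_add, prod_range_succ']
  have hrest : ∏ i ∈ range m, exp (-max (w (i + 1) * (t - a (i + 1))) 0) ≤ 1 :=
    prod_le_one (fun _ _ => (exp_pos _).le)
      fun _ _ => exp_le_one_iff.mpr (neg_nonpos.mpr (le_max_right _ _))
  calc _ ≤ 1 * exp (-max (w 0 * (t - a 0)) 0) := by gcongr
    _ ≤ exp (-(w 0 * (t - a 0))) := by
      rw [one_mul]
      exact exp_le_exp.mpr (neg_le_neg (le_max_left _ _))

lemma integrableOn_Ioi (hn : 0 < n) (hw : 0 < w 0) (c : ℝ) :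
    IntegrableOn (minTail a w n) (Ioi c) := by
  have hbound : IntegrableOn (fun t => exp (w 0 * a 0) * exp (-w 0 * t)) (Ioi c) :=
    (exp_neg_integrableOn_Ioi c hw).const_mul _
  refine hbound.mono' continuous.aestronglyMeasurable (ae_of_all _ fun t => ?_)
  rw [norm_of_nonneg (nonneg t), ← exp_add]
  exact (le_exp hn t).trans_eq (by ring_nf)

variable (hw : ∀ i, 0 < w i) (ha : Monotone a)
include hw ha

lemma eq_exp_sum {i : ℕ} (hi : i < n) {t : ℝ} (hit : a i ≤ t) (hti : i + 1 < n → t ≤ a (i + 1)) :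
    minTail a w n t = exp (∑ j ∈ range (i + 1), w j * (a j - t)) := by
  rw [minTail, ← prod_range_mul_prod_Ico _ hi, exp_sum]
  have hactive : ∀ j ∈ range (i + 1), exp (-max (w j * (t - a j)) 0) = exp (w j * (a j - t)) := by
    intro j hj
    have hjt : a j ≤ t := (ha (Nat.lt_succ_iff.mp (mem_range.mp hj))).trans hit
    rw [max_eq_left (mul_nonneg (hw j).le (sub_nonneg.mpr hjt))]
    ring_nf
  have hidle : ∀ j ∈ Finset.Ico (i + 1) n, exp (-max (w j * (t - a j)) 0) = 1 := by
    intro j hj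
    obtain ⟨hij, hjn⟩ := Finset.mem_Ico.mp hj
    have htj : t ≤ a j := (hti (hij.trans_lt hjn)).trans (ha hij)
    rw [max_eq_right (mul_nonpos_of_nonneg_of_nonpos (hw j).le (sub_nonpos.mpr htj)),
      neg_zero, exp_zero]
  rw [prod_congr rfl hactive, prod_eq_one hidle, mul_one]

lemma eq_mul_exp {i : ℕ} (hi : i < n) {t : ℝ} (hit : a i ≤ t) (hti : i + 1 < n → t ≤ a (i + 1)) :
    minTail a w n t = minTail a w n (a i) * exp ((∑ j ∈ range (i + 1), w j) * (a i - t)) := by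
  rw [eq_exp_sum hw ha hi hit hti, eq_exp_sum hw ha hi le_rfl fun _ => ha (Nat.le_succ i),
    ← exp_add, sum_mul, ← sum_add_distrib]
  exact congrArg exp (sum_congr rfl fun j _ => by ring)

lemma apply_a_zero : minTail a w n (a 0) = 1 :=
  prod_eq_one fun j _ => by
    rw [max_eq_right (mul_nonpos_of_nonneg_of_nonpos (hw j).le
      (sub_nonpos.mpr (ha (Nat.zero_le j)))), neg_zero, exp_zero]

lemma prod_eq_apply {h : ℕ → ℝ}
    (hh : ∀ i, i + 1 < n → h i = exp ((∑ j ∈ range (i + 1), w j) * (a i - a (i + 1)))) :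
    ∀ i < n, ∏ j ∈ range i, h j = minTail a w n (a i)
  | 0, _ => by rw [prod_range_zero, apply_a_zero hw ha]
  | i + 1, hi => by
    rw [prod_range_succ, prod_eq_apply hh i (by omega), hh i hi,
      eq_mul_exp hw ha (by omega : i < n) (ha (Nat.le_succ i)) fun _ => le_rfl]

lemma setIntegral_Ioc {i : ℕ} (hi : i + 1 < n) :
    ∫ t in Ioc (a i) (a (i + 1)), minTail a w n t
      = minTail a w n (a i) * (1 - exp ((∑ j ∈ range (i + 1), w j) * (a i - a (i + 1))))
        / ∑ j ∈ range (i + 1), w j := by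
  have hW : 0 < ∑ j ∈ range (i + 1), w j := sum_pos (fun j _ => hw j) nonempty_range_add_one
  rw [setIntegral_congr_fun measurableSet_Ioc
      fun t ht => eq_mul_exp hw ha (by omega) ht.1.le fun _ => ht.2,
    integral_const_mul, integral_Ioc_exp_mul_sub hW.ne' (ha (Nat.le_succ i)), mul_div_assoc]

lemma setIntegral_Ioi_last (m : ℕ) :
    ∫ t in Ioi (a m), minTail a w (m + 1) t
      = minTail a w (m + 1) (a m) / ∑ j ∈ range (m + 1), w j := by
  have hW : 0 < ∑ j ∈ range (m + 1), w j := sum_pos (fun j _ => hw j) nonempty_range_add_one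
  rw [setIntegral_congr_fun measurableSet_Ioi
      fun t ht => eq_mul_exp hw ha (Nat.lt_succ_self m) (le_of_lt ht) fun h => absurd h (by omega),
    integral_const_mul, integral_Ioi_exp_mul_sub hW, mul_one_div]

theorem integral_Ioi {m : ℕ} {h : ℕ → ℝ}
    (hh : ∀ i, i + 1 < m + 1 → h i = exp ((∑ j ∈ range (i + 1), w j) * (a i - a (i + 1))))
    (hlast : h m = 0) :
    ∫ t in Ioi (a 0), minTail a w (m + 1) t
      = ∑ i ∈ range (m + 1), (1 - h i) * (∏ j ∈ range i, h j) / ∑ j ∈ range (i + 1), w j := by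
  rw [integral_Ioi_eq_sum_Ioc_add_Ioi ha (integrableOn_Ioi m.succ_pos (hw 0) _) m,
    sum_range_succ, setIntegral_Ioi_last hw ha, hlast, prod_eq_apply hw ha hh m m.lt_succ_self,
    sub_zero, one_mul]
  congr 1
  refine sum_congr rfl fun i hi => ?_
  have hi' : i + 1 < m + 1 := by simpa using hi
  rw [setIntegral_Ioc hw ha hi', ← hh i hi', prod_eq_apply hw ha hh i (by omega),
    mul_comm (1 - h i)]

end minTail

theorem Finset.aemeasurable_sup' {α ι Ω : Type*} [MeasurableSpace α] [SemilatticeSup α]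
    [MeasurableSup₂ α] [MeasurableSpace Ω] {μ : Measure Ω} {s : Finset ι} (hs : s.Nonempty)
    {f : ι → Ω → α} (hf : ∀ i ∈ s, AEMeasurable (f i) μ) :
    AEMeasurable (fun ω => s.sup' hs fun i => f i ω) μ := by
  convert Finset.sup'_induction hs f (p := fun g => AEMeasurable g μ)
    (fun _ hg _ hg' => AEMeasurable.sup hg hg') hf using 1
  exact funext fun ω => (Finset.sup'_apply hs f ω).symm

namespace ProbabilityTheory

lemma ae_nonneg_expMeasure (r : ℝ) : ∀ᵐ x ∂expMeasure r, 0 ≤ x := by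
  rw [ae_iff]
  simp only [not_le]
  change expMeasure r (Iio 0) = 0
  rw [expMeasure, gammaMeasure, withDensity_apply _ measurableSet_Iio]
  exact lintegral_gammaPDF_of_nonpos le_rfl

lemma expMeasure_Ioi {r : ℝ} (hr : 0 < r) (s : ℝ) :
    expMeasure r (Ioi s) = ENNReal.ofReal (exp (-(r * max s 0))) := by
  have := isProbabilityMeasure_expMeasure hr
  rw [← compl_Iic, prob_compl_eq_one_sub measurableSet_Iic, ← ofReal_cdf,
    cdf_expMeasure_eq hr, ← ENNReal.ofReal_one]
  rcases le_or_gt 0 s with hs | hs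
  · have hle : exp (-(r * s)) ≤ 1 := exp_le_one_iff.mpr (by nlinarith)
    rw [if_pos hs, max_eq_left hs, ← ENNReal.ofReal_sub _ (sub_nonneg.mpr hle), sub_sub_cancel]
  · simp [hs.not_ge, hs.le]

variable {Ω : Type*} [MeasurableSpace Ω] {μ : Measure Ω} {r : ℝ}

lemma aemeasurable_of_map_eq_expMeasure (hr : 0 < r) {X : Ω → ℝ} (hX : μ.map X = expMeasure r) :
    AEMeasurable X μ :=
  AEMeasurable.of_map_ne_zero <| hX ▸ (isProbabilityMeasure_expMeasure hr).ne_zero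

lemma ae_nonneg_of_map_eq_expMeasure (hr : 0 < r) {X : Ω → ℝ} (hX : μ.map X = expMeasure r) :
    ∀ᵐ ω ∂μ, 0 ≤ X ω :=
  ae_of_ae_map (aemeasurable_of_map_eq_expMeasure hr hX) (hX ▸ ae_nonneg_expMeasure r)

lemma measure_iInter_preimage_Ioi_of_map_eq_expMeasure (hr : 0 < r) {ι : Type*}
    {X : ι → Ω → ℝ} (hindep : iIndepFun X μ) (hX : ∀ i, μ.map (X i) = expMeasure r)
    (s : Finset ι) (c : ι → ℝ) :
    μ (⋂ i ∈ s, X i ⁻¹' Ioi (c i)) = ENNReal.ofReal (∏ i ∈ s, exp (-(r * max (c i) 0))) := by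
  rw [iIndepFun_iff_measure_inter_preimage_eq_mul.mp hindep s fun i _ => measurableSet_Ioi,
    ENNReal.ofReal_prod_of_nonneg fun i _ => (exp_pos _).le]
  refine Finset.prod_congr rfl fun i _ => ?_
  rw [← Measure.map_apply_of_aemeasurable (aemeasurable_of_map_eq_expMeasure hr (hX i))
    measurableSet_Ioi, hX i, expMeasure_Ioi hr]

lemma measure_lt_sub_sup'_eq_minTail {X : ℕ → Ω → ℝ} (hindep : iIndepFun X μ)
    (hX : ∀ i, μ.map (X i) = expMeasure 1) {w : ℕ → ℝ} (hw : ∀ i, 0 < w i) (c : ℕ → ℝ)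
    {n : ℕ} (hn : (range n).Nonempty) (b t : ℝ) :
    μ {ω | t < b - (range n).sup' hn fun i => c i - X i ω / w i}
      = ENNReal.ofReal (minTail (fun i => b - c i) w n t) := by
  have hevent : {ω | t < b - (range n).sup' hn fun i => c i - X i ω / w i}
      = ⋂ i ∈ range n, X i ⁻¹' Ioi (w i * (t - (b - c i))) := by
    ext ω
    simp only [Set.mem_iInter, Set.mem_preimage, Set.mem_Ioi]
    rw [Set.mem_ofPred_eq, lt_sub_comm, Finset.sup'_lt_iff]
    refine forall₂_congr fun i _ => ?_
    rw [← lt_div_iff₀' (hw i)]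
    constructor <;> intro <;> linarith
  rw [hevent, measure_iInter_preimage_Ioi_of_map_eq_expMeasure one_pos hindep hX, minTail]
  simp only [one_mul]

end ProbabilityTheory

section TailIntegral

variable {Ω : Type*} [MeasurableSpace Ω] {μ : Measure Ω}

theorem integrable_and_integral_eq_of_meas_lt {Y : Ω → ℝ} {G : ℝ → ℝ}
    (hY0 : 0 ≤ᵐ[μ] Y) (hYm : AEMeasurable Y μ) (hG0 : ∀ t, 0 ≤ G t)
    (hG : IntegrableOn G (Ioi 0)) (htail : ∀ t, μ {ω | t < Y ω} = ENNReal.ofReal (G t)) :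
    Integrable Y μ ∧ ∫ ω, Y ω ∂μ = ∫ t in Ioi 0, G t := by
  have hlin : ∫⁻ ω, ENNReal.ofReal (Y ω) ∂μ = ENNReal.ofReal (∫ t in Ioi 0, G t) := by
    rw [lintegral_eq_lintegral_meas_lt μ hY0 hYm, ofReal_integral_eq_lintegral_ofReal hG
      (Filter.Eventually.of_forall hG0)]
    simp only [htail]
  refine ⟨⟨hYm.aestronglyMeasurable, ?_⟩, ?_⟩
  · rw [hasFiniteIntegral_iff_ofReal hY0, hlin]
    exact ENNReal.ofReal_lt_top
  · rw [integral_eq_lintegral_of_nonneg_ae hY0 hYm.aestronglyMeasurable, hlin,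
      ENNReal.toReal_ofReal (setIntegral_nonneg measurableSet_Ioi fun t _ => hG0 t)]

end TailIntegral

/-- Expected maximum of independent reversed exponentials `e i = z i - X i / ω i`
with `X i ~ Exp(1)`, `z` nonincreasing. -/
theorem stmt0 {Ω : Type*} [MeasureSpace Ω] [IsProbabilityMeasure (ℙ : Measure Ω)]
    (n : ℕ) (hn : 0 < n) (z : ℕ → ℝ) (w : ℕ → ℝ) (hw : ∀ i, 0 < w i)
    (X : ℕ → Ω → ℝ)
    (hindep : iIndepFun X ℙ)
    (hX : ∀ i, Measure.map (X i) ℙ = expMeasure 1)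
    (hz : ∀ i j, i ≤ j → z j ≤ z i)
    (e : ℕ → Ω → ℝ) (he : ∀ i ω, e i ω = z i - X i ω / w i)
    (h : ℕ → ℝ)
    (hh : ∀ i, i + 1 < n →
      h i = Real.exp (∑ j ∈ Finset.range (i + 1), w j * (z (i + 1) - z i)))
    (hlast : h (n - 1) = 0) :
    ∫ ω, (Finset.range n).sup' (Finset.nonempty_range_iff.mpr hn.ne') (fun i => e i ω) ∂ℙ
      = z 0 - ∑ i ∈ Finset.range n,
          ((1 - h i) * ∏ j ∈ Finset.range i, h j) / (∑ j ∈ Finset.range (i + 1), w j) := by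
  obtain ⟨m, rfl⟩ : ∃ m, n = m + 1 := ⟨n - 1, by omega⟩
  simp only [he]
  set M : Ω → ℝ := fun ω => (range (m + 1)).sup' (nonempty_range_iff.mpr hn.ne')
    fun i => z i - X i ω / w i
  set a : ℕ → ℝ := fun i => z 0 - z i
  have ha : Monotone a := fun i j hij => sub_le_sub_left (hz i j hij) _
  have hh' : ∀ i, i + 1 < m + 1 → h i = Real.exp ((∑ j ∈ range (i + 1), w j) * (a i - a (i + 1))) :=
    fun i hi => by
      rw [hh i hi, sum_mul]
      exact congrArg Real.exp (sum_congr rfl fun j _ => by ring)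
  have hM_le : ∀ᵐ ω ∂ℙ, 0 ≤ z 0 - M ω := by
    filter_upwards [ae_all_iff.mpr fun i => ae_nonneg_of_map_eq_expMeasure one_pos (hX i)]
      with ω hX_nonneg
    refine sub_nonneg.mpr (Finset.sup'_le _ _ fun i _ => ?_)
    linarith [hz 0 i i.zero_le, div_nonneg (hX_nonneg i) (hw i).le]
  have hM_meas : AEMeasurable M ℙ := Finset.aemeasurable_sup' _ fun i _ =>
    aemeasurable_const.sub ((aemeasurable_of_map_eq_expMeasure one_pos (hX i)).div_const _)
  obtain ⟨hgap_int, hgap_integral⟩ := integrable_and_integral_eq_of_meas_lt hM_le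
    (aemeasurable_const.sub hM_meas) minTail.nonneg
    (minTail.integrableOn_Ioi m.succ_pos (hw 0) 0)
    (measure_lt_sub_sup'_eq_minTail hindep hX hw z _ (z 0))
  have hM_int : Integrable M ℙ :=
    ((integrable_const (z 0)).sub hgap_int).congr (ae_of_all _ fun ω => sub_sub_cancel _ _)
  have htail_integral := minTail.integral_Ioi hw ha hh' hlast
  rw [show a 0 = 0 from sub_self _] at htail_integral
  rw [integral_sub (integrable_const _) hM_int, integral_const, probReal_univ, one_smul,
    htail_integral] at hgap_integral
  linarith
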